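/- arXiv:1308.0042 — 5 statements merged into one kernel-verified Lean document; each statement's English description precedes it below -/
import Mathlib

section
/- In the tropical semiring T = (ℝ ∪ {-∞}, max, +), for any r in the closed interval [t₁, t₂] ⊆ ℝ, the identity (t₁ - r) + b_{t₁} ⊕ b_{t₂} = b_r holds in the quotient semiring of functions, where b_t(x) = max(0, x - t); that is, for all x ∈ T: max(t₁ - r + max(0, x - t₁), max(0, x - t₂)) = max(0, x - r). -/
/-- In the tropical semiring, for `t₁ ≤ r ≤ t₂` one has
`(t₁ - r) ⊙ b_{t₁} ⊕ b_{t₂} = b_r` pointwise, where `b_t(x) = max 0 (x - t)`. -/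
theorem stmt10 (t₁ t₂ r x : ℝ) (h1 : t₁ ≤ r) (h2 : r ≤ t₂) :
    max (t₁ - r + max 0 (x - t₁)) (max 0 (x - t₂)) = max 0 (x - r) := by
  have hshift : t₁ - r + max 0 (x - t₁) = max (t₁ - r) (x - r) := by
    rw [add_max, add_zero, sub_add_sub_cancel']
  rw [hshift]
  apply le_antisymm
  · exact max_le (max_le_max (by linarith) le_rfl) (max_le_max le_rfl (by linarith))
  · exact max_le (le_max_of_le_right (le_max_left _ _)) (le_max_of_le_left (le_max_right _ _))
end

section
/- Let S be an idempotent commutative semiring, M a commutative monoid (viewed as monomials), and f ∈ M-indexed finitely supported functions to S (i.e., the monoid semiring S[M]). For a unit λ ∈ S, the bend congruence of λf equals the bend congruence of f: the S-module congruence generated by the relations {λf ∼ (λf) with the a-term deleted : a ∈ supp(f)} equals that generated by {f ∼ f with the a-term deleted : a ∈ supp(f)}. -/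
/-- A module congruence on an `S`-module `N`: an equivalence relation closed under
addition and scalar multiplication. -/
def IsModCong (S N : Type*) [Semiring S] [AddCommMonoid N] [Module S N]
    (r : N → N → Prop) : Prop :=
  Equivalence r ∧ (∀ a b c d : N, r a b → r c d → r (a + c) (b + d)) ∧
    (∀ (s : S) (a b : N), r a b → r (s • a) (s • b))

/-- The module congruence generated by a set of pairs. -/
def modCongGen (S N : Type*) [Semiring S] [AddCommMonoid N] [Module S N]
    (p : N → N → Prop) : N → N → Prop :=
  fun x y => ∀ r : N → N → Prop, IsModCong S N r → (∀ a b, p a b → r a b) → r x y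

/-- The bend relations of `f ∈ M ⊗ S`: `f ∼ f_â` for each `a ∈ supp f`, where `f_â`
is `f` with the `a`-term deleted. -/
def bendPairs {S M : Type*} [Zero S] (f : M →₀ S) : (M →₀ S) → (M →₀ S) → Prop :=
  fun x y => ∃ a ∈ f.support, x = f ∧ y = Finsupp.erase a f

/- Every bend relation of `s • f` is `s` times a bend relation of `f`, since
`(s • f)_â = s • f_â` and `supp (s • f) ⊆ supp f`; so `B(s • f) ≤ B(f)` for every scalar `s`.
For a unit `λ`, applying this to `λ⁻¹` and `λ • f` gives the reverse inclusion. -/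

section ModCong

variable {S N : Type*} [Semiring S] [AddCommMonoid N] [Module S N]

theorem isModCong_modCongGen (p : N → N → Prop) : IsModCong S N (modCongGen S N p) :=
  ⟨⟨fun x _ hr _ => hr.1.refl x,
      fun h r hr hp => hr.1.symm (h r hr hp),
      fun h₁ h₂ r hr hp => hr.1.trans (h₁ r hr hp) (h₂ r hr hp)⟩,
    fun a b c d h₁ h₂ r hr hp => hr.2.1 a b c d (h₁ r hr hp) (h₂ r hr hp),
    fun s a b h r hr hp => hr.2.2 s a b (h r hr hp)⟩

theorem modCongGen_of_rel {p : N → N → Prop} {a b : N} (h : p a b) : modCongGen S N p a b :=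
  fun _ _ hp => hp a b h

theorem modCongGen_le {p q : N → N → Prop} (h : ∀ a b, p a b → modCongGen S N q a b) :
    modCongGen S N p ≤ modCongGen S N q :=
  fun _ _ hab => hab _ (isModCong_modCongGen q) h

theorem modCongGen_smul {p : N → N → Prop} (s : S) {a b : N} (h : modCongGen S N p a b) :
    modCongGen S N p (s • a) (s • b) :=
  (isModCong_modCongGen p).2.2 s a b h

end ModCong

theorem Finsupp.erase_smul {α R M : Type*} [Zero M] [SMulZeroClass R M]
    (a : α) (s : R) (f : α →₀ M) : (s • f).erase a = s • f.erase a := by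
  ext b
  by_cases h : b = a <;> simp [h]

theorem modCongGen_bendPairs_smul_le {S R M : Type*} [Semiring S] [AddCommMonoid R]
    [Module S R] (s : S) (f : M →₀ R) :
    modCongGen S (M →₀ R) (bendPairs (s • f)) ≤ modCongGen S (M →₀ R) (bendPairs f) := by
  refine modCongGen_le ?_
  rintro _ _ ⟨a, ha, rfl, rfl⟩
  rw [Finsupp.erase_smul]
  exact modCongGen_smul s (modCongGen_of_rel ⟨a, Finsupp.support_smul ha, rfl, rfl⟩)

theorem stmt13_general (S M : Type*) [CommSemiring S]
    (f : M →₀ S) (lam : S) (hl : IsUnit lam) :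
    modCongGen S (M →₀ S) (bendPairs (lam • f)) = modCongGen S (M →₀ S) (bendPairs f) := by
  obtain ⟨u, rfl⟩ := hl
  refine le_antisymm (modCongGen_bendPairs_smul_le _ f) ?_
  simpa [smul_smul] using modCongGen_bendPairs_smul_le (↑u⁻¹ : S) ((u : S) • f)

/-- For a unit `λ ∈ S`, the bend congruence of `λ • f` equals the bend congruence
of `f`. -/
theorem stmt13 (S M : Type*) [CommSemiring S] (hidem : ∀ s : S, s + s = s)
    (f : M →₀ S) (lam : S) (hl : IsUnit lam) :
    modCongGen S (M →₀ S) (bendPairs (lam • f)) = modCongGen S (M →₀ S) (bendPairs f) :=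
  stmt13_general S M f lam hl
end

section
/- Let S be an idempotent semifield and M a finite pointed set. If f, g ∈ M⊗S are nonzero elements with B(f) = B(g) as module congruences on the free S-module M⊗S, then g = λf for some unit λ ∈ S. -/
section ModCong

variable {S N P : Type*} [Semiring S] [AddCommMonoid N] [Module S N] [AddCommMonoid P]
  [Module S P]

theorem modCongGen_of_rel_s16 {p : N → N → Prop} {x y : N} (hxy : p x y) :
    modCongGen S N p x y :=
  fun _ _ hr => hr x y hxy

theorem LinearMap.isModCong_ker (φ : N →ₗ[S] P) : IsModCong S N fun x y => φ x = φ y :=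
  ⟨⟨fun _ => rfl, Eq.symm, Eq.trans⟩, fun _ _ _ _ hab hcd => by simp only [map_add, hab, hcd],
    fun _ _ _ hab => by simp only [map_smul, hab]⟩

theorem LinearMap.eq_of_modCongGen (φ : N →ₗ[S] P) {p : N → N → Prop}
    (hp : ∀ a b, p a b → φ a = φ b) {x y : N} (hxy : modCongGen S N p x y) : φ x = φ y :=
  hxy _ φ.isModCong_ker hp

end ModCong

section Bend

variable {S M P : Type*} [CommSemiring S] [AddCommMonoid P] [Module S P]

def RespectsBend (φ : (M →₀ S) →ₗ[S] P) (f : M →₀ S) : Prop :=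
  ∀ a ∈ f.support, φ (f.erase a) = φ f

theorem RespectsBend.of_modCongGen_eq {f g : M →₀ S}
    (h : modCongGen S (M →₀ S) (bendPairs f) = modCongGen S (M →₀ S) (bendPairs g))
    {φ : (M →₀ S) →ₗ[S] P} (hφ : RespectsBend φ f) : RespectsBend φ g := by
  intro a ha
  have hbend : modCongGen S (M →₀ S) (bendPairs f) g (g.erase a) := by
    rw [h]
    exact modCongGen_of_rel_s16 ⟨a, ha, rfl, rfl⟩
  refine (φ.eq_of_modCongGen ?_ hbend).symm
  rintro _ _ ⟨b, hb, rfl, rfl⟩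
  exact (hφ b hb).symm

theorem respectsBend_lapply {f : M →₀ S} {k : M} (hk : k ∉ f.support) :
    RespectsBend (Finsupp.lapply k) f := by
  intro a _
  rw [Finsupp.notMem_support_iff] at hk
  by_cases hka : k = a
  · simp [hka ▸ hk]
  · simp [Finsupp.erase_ne hka]

theorem support_subset_of_modCongGen_eq {f g : M →₀ S}
    (h : modCongGen S (M →₀ S) (bendPairs f) = modCongGen S (M →₀ S) (bendPairs g)) :
    g.support ⊆ f.support := by
  intro k hk
  by_contra hkf
  have hgk := (respectsBend_lapply hkf).of_modCongGen_eq h k hk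
  rw [Finsupp.lapply_apply, Finsupp.lapply_apply, Finsupp.erase_same] at hgk
  exact Finsupp.mem_support_iff.1 hk hgk.symm

theorem respectsBend_pair (h11 : (1 : S) + 1 = 1) {f : M →₀ S} {i j : M} (hij : i ≠ j)
    {u v : S} (hu : f i * u = 1) (hv : f j * v = 1) :
    RespectsBend (u • Finsupp.lapply i + v • Finsupp.lapply j) f := by
  intro a _
  simp only [LinearMap.add_apply, LinearMap.smul_apply, Finsupp.lapply_apply, smul_eq_mul]
  rw [mul_comm] at hu hv
  by_cases hai : i = a
  · subst hai
    simp [Finsupp.erase_ne hij.symm, hu, hv, h11]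
  by_cases haj : j = a
  · subst haj
    simp [Finsupp.erase_ne hij, hu, hv, h11]
  rw [Finsupp.erase_ne hai, Finsupp.erase_ne haj]

theorem mul_eq_mul_of_modCongGen_eq (h11 : (1 : S) + 1 = 1) {f g : M →₀ S}
    (h : modCongGen S (M →₀ S) (bendPairs f) = modCongGen S (M →₀ S) (bendPairs g))
    (hunit : ∀ m ∈ f.support, IsUnit (f m)) (i j : M) : g i * f j = g j * f i := by
  have hsupp : g.support = f.support :=
    (support_subset_of_modCongGen_eq h).antisymm (support_subset_of_modCongGen_eq h.symm)
  have hzero (m : M) (hm : m ∉ f.support) : f m = 0 ∧ g m = 0 :=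
    ⟨Finsupp.notMem_support_iff.1 hm, Finsupp.notMem_support_iff.1 (by rwa [hsupp])⟩
  by_cases hi : i ∈ f.support
  swap
  · simp [hzero i hi]
  by_cases hj : j ∈ f.support
  swap
  · simp [hzero j hj]
  by_cases hij : i = j
  · rw [hij]
  obtain ⟨u, hu⟩ := (hunit i hi).exists_right_inv
  obtain ⟨v, hv⟩ := (hunit j hj).exists_right_inv
  have hφ := (respectsBend_pair h11 hij hu hv).of_modCongGen_eq h
  have hφi := hφ i (hsupp ▸ hi)
  have hφj := hφ j (hsupp ▸ hj)
  simp only [LinearMap.add_apply, LinearMap.smul_apply, Finsupp.lapply_apply, smul_eq_mul,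
    Finsupp.erase_same, Finsupp.erase_ne hij, Finsupp.erase_ne (Ne.symm hij), mul_zero,
    zero_add, add_zero] at hφi hφj
  have hratio : u * g i = v * g j := hφj.trans hφi.symm
  calc g i * f j = (u * g i) * f i * f j := by
        rw [mul_comm u, mul_assoc (g i), mul_comm u, hu, mul_one]
    _ = (v * g j) * f j * f i := by rw [hratio]; ring
    _ = g j * f i := by rw [mul_comm v, mul_assoc (g j), mul_comm v, hv, mul_one]

end Bend

theorem stmt16_general (S M : Type*) [CommSemiring S]
    (hidem : ∀ s : S, s + s = s)
    (hinv : ∀ a : S, a ≠ 0 → ∃ b : S, a * b = 1)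
    (f g : M →₀ S) (hf : f ≠ 0)
    (h : modCongGen S (M →₀ S) (bendPairs f) = modCongGen S (M →₀ S) (bendPairs g)) :
    ∃ lam : S, IsUnit lam ∧ g = lam • f := by
  have hunit : ∀ a : S, a ≠ 0 → IsUnit a := fun a ha =>
    let ⟨b, hb⟩ := hinv a ha; .of_mul_eq_one b hb
  have hcross := mul_eq_mul_of_modCongGen_eq (hidem 1) h
    fun m hm => hunit _ (Finsupp.mem_support_iff.1 hm)
  obtain ⟨i, hi⟩ := Finsupp.support_nonempty_iff.2 hf
  have hgi : g i ≠ 0 := Finsupp.mem_support_iff.1 (support_subset_of_modCongGen_eq h.symm hi)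
  obtain ⟨u, hu⟩ := hinv (f i) (Finsupp.mem_support_iff.1 hi)
  refine ⟨g i * u, (hunit _ hgi).mul (.of_mul_eq_one _ (mul_comm (f i) u ▸ hu)), ?_⟩
  ext m
  calc g m = g m * f i * u := by rw [mul_assoc, hu, mul_one]
    _ = g i * u * f m := by rw [hcross m i]; ring

/-- Over an idempotent semifield `S` and a finite pointed set of monomials `M`,
two nonzero elements of the free module `M ⊗ S` with equal bend congruences differ
by a unit scalar. -/
theorem stmt16 (S M : Type*) [CommSemiring S] [Fintype M]
    (hidem : ∀ s : S, s + s = s)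
    (hinv : ∀ a : S, a ≠ 0 → ∃ b : S, a * b = 1)
    (f g : M →₀ S) (hf : f ≠ 0) (hg : g ≠ 0)
    (h : modCongGen S (M →₀ S) (bendPairs f) = modCongGen S (M →₀ S) (bendPairs g)) :
    ∃ lam : S, IsUnit lam ∧ g = lam • f :=
  stmt16_general S M hidem hinv f g hf h
end

section
/- Let ν : R → S be a valuation from a commutative ring to an idempotent semiring, and A an integral commutative monoid (multiplication by any element is injective). For an ideal I of the monoid ring R[A], the S-submodule trop(I) of S[A] generated by {ν(f) : f ∈ I} (coefficient-wise valuation) is an ideal of S[A]. -/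
/-!
Integrality of `A` makes left multiplication by a monomial `a` an injective relabelling of
supports, so it commutes with applying `ν` coefficientwise: `a · ν(f) = ν(a f)`, and `a f ∈ I`.
Hence `trop(I)` is stable under monomials, and since monomials span `S[A]` over `S`, under all
of `S[A]`.
-/

namespace MonoidAlgebra

variable {R S A : Type*} [Semiring R] [Semiring S] [Mul A]

lemma coeff_single_one_mul_eq_embDomain {a : A} (ha : Function.Injective (a * ·))
    (f : MonoidAlgebra R A) :
    (single a (1 : R) * f).coeff = f.coeff.embDomain ⟨_, ha⟩ := by
  rw [Finsupp.embDomain_eq_mapDomain, mul_def, coeff_single, Finsupp.sum_single_index]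
  · simp [coeff_finsuppSum, Finsupp.mapDomain]
  · simp [Finsupp.sum]

lemma single_one_mul_ofCoeff_mapRange (ν : R → S) (h0 : ν 0 = 0) {a : A}
    (ha : Function.Injective (a * ·)) (f : MonoidAlgebra R A) :
    single a (1 : S) * ofCoeff (f.coeff.mapRange ν h0) =
      ofCoeff ((single a (1 : R) * f).coeff.mapRange ν h0) := by
  apply coeff_injective
  rw [coeff_single_one_mul_eq_embDomain ha, coeff_single_one_mul_eq_embDomain ha, coeff_ofCoeff,
    coeff_ofCoeff, Finsupp.embDomain_mapRange]

end MonoidAlgebra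

lemma Submodule.mul_mem_span_of_mul_mem_span {S B : Type*} [CommSemiring S]
    [NonUnitalNonAssocSemiring B] [Module S B] [SMulCommClass S B B] {X : Set B} {c : B}
    (hc : ∀ x ∈ X, c * x ∈ span S X) {y : B} (hy : y ∈ span S X) : c * y ∈ span S X :=
  (span_le (p := (span S X).comap (LinearMap.mulLeft S c))).mpr hc hy

lemma MonoidAlgebra.mul_mem_of_forall_single_one_mul_mem {S A : Type*} [CommSemiring S] [Mul A]
    (T : Submodule S (MonoidAlgebra S A))
    (hT : ∀ a : A, ∀ h ∈ T, single a (1 : S) * h ∈ T) (g : MonoidAlgebra S A) {h : MonoidAlgebra S A}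
    (hh : h ∈ T) : g * h ∈ T := by
  induction g using MonoidAlgebra.induction_linear with
  | zero => simp
  | add g₁ g₂ h₁ h₂ => rw [add_mul]; exact T.add_mem h₁ h₂
  | single a s =>
    rw [show single a s = s • single a (1 : S) by simp, smul_mul_assoc]
    exact T.smul_mem s (hT a h hh)

theorem stmt17_general (R S A : Type*) [CommRing R] [CommSemiring S] [CommMonoid A]
    (hint : ∀ x a b : A, x * a = x * b → a = b)
    (ν : R → S) (h0 : ν 0 = 0)
    (I : Ideal (MonoidAlgebra R A))
    (T : Submodule S (MonoidAlgebra S A))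
    (hT : T = Submodule.span S
      ((fun f : MonoidAlgebra R A => (MonoidAlgebra.ofCoeff (Finsupp.mapRange ν h0 f.coeff) : MonoidAlgebra S A)) '' I)) :
    ∀ g : MonoidAlgebra S A, ∀ h ∈ T, g * h ∈ T := by
  subst hT
  refine MonoidAlgebra.mul_mem_of_forall_single_one_mul_mem _ fun a _ ↦
    Submodule.mul_mem_span_of_mul_mem_span ?_
  rintro _ ⟨f, hf, rfl⟩
  rw [MonoidAlgebra.single_one_mul_ofCoeff_mapRange ν h0 (hint a)]
  exact Submodule.subset_span ⟨_, I.mul_mem_left _ hf, rfl⟩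

/-- Let `ν : R → S` be a valuation from a commutative ring to an idempotent
commutative semiring, and `A` an integral commutative monoid (multiplication by any
element is injective on monomials).  For an ideal `I ⊆ R[A]`, the `S`-submodule
`trop(I) ⊆ S[A]` spanned by the coefficientwise valuations `ν(f)`, `f ∈ I`, is an
ideal of the monoid semiring `S[A]`. -/
theorem stmt17 (R S A : Type*) [CommRing R] [CommSemiring S] [CommMonoid A]
    (hidem : ∀ s : S, s + s = s)
    (hint : ∀ x a b : A, x * a = x * b → a = b)
    (ν : R → S) (h0 : ν 0 = 0) (h1 : ν 1 = 1) (hneg : ν (-1) = 1)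
    (hmul : ∀ a b : R, ν (a * b) = ν a * ν b)
    (hsub : ∀ a b : R, ν (a + b) + ν a + ν b = ν a + ν b)
    (I : Ideal (MonoidAlgebra R A))
    (T : Submodule S (MonoidAlgebra S A))
    (hT : T = Submodule.span S
      ((fun f : MonoidAlgebra R A => (MonoidAlgebra.ofCoeff (Finsupp.mapRange ν h0 f.coeff) : MonoidAlgebra S A)) '' I)) :
    ∀ g : MonoidAlgebra S A, ∀ h ∈ T, g * h ∈ T :=
  stmt17_general R S A hint ν h0 I T hT
end

section
/- Let ν : k → S be a valued field with S an idempotent semiring, and let f = ax + by ∈ k[x, y] be a binomial in two variables with a, b ∈ k nonzero. For every g ∈ k[x,y] written with support {z₁,…,z_n} forming a chain zᵢ·x = z_{i+1}·y of monomials, the bend relations of ν(fg) are implied by the single relation ν(a)x ∼ ν(b)y together with the semiring structure of S[x,y]; in particular the semiring congruence generated by B(ν(f)) contains B(ν(fg)). -/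
/-!
Modulo the bend relations of `ν(f) = ν(a)x + ν(b)y` one has `ν(a)x ∼ ν(b)y`, hence
`ν(a g_z)·xz ∼ ν(b g_z)·yz` for every monomial `z`. Fix a monomial `m` of `fg`. Since
`(fg)_m = a g_{m/x} + b g_{m/y}`, subadditivity and the total order give, say,
`ν((fg)_m) ≤ ν(b g_z)` with `yz = m`. Trade the term `ν(b g_z)·yz` for `ν(a g_z)·xz`; when
`xz = yz'` the non-archimedean inequality `ν(a g_z) ≤ ν((fg)_{xz}) + ν(b g_{z'})` lets the
remaining terms of `ν(fg)` together with the next term `ν(b g_{z'})·yz'` absorb it. The chain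
moves away from `m` and ends, so `ν(fg) ∼ ν(fg) - ν((fg)_m)·m`.
-/

/-- The bend relations of a tropical polynomial `h ∈ S[x,y]` (modelled as an element
of the additive monoid algebra over the monomial monoid `Fin 2 →₀ ℕ`). -/
def bendRel {S : Type*} [CommSemiring S] (h : AddMonoidAlgebra S (Fin 2 →₀ ℕ)) :
    AddMonoidAlgebra S (Fin 2 →₀ ℕ) → AddMonoidAlgebra S (Fin 2 →₀ ℕ) → Prop :=
  fun u v => ∃ m ∈ h.coeff.support, u = h ∧ v = AddMonoidAlgebra.ofCoeff (Finsupp.erase m h.coeff : (Fin 2 →₀ ℕ) →₀ S)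

open AddMonoidAlgebra

-- In an idempotent semiring `s ≤ t` means `s + t = t`; inequalities are stated in that form.

theorem RingCon.rel_add_of_le {R : Type*} [AddCommSemigroup R] [Mul R] (c : RingCon R)
    {e s t : R} (ht : c (e + t) e) (hs : s + (e + t) = e + t) : c (e + s) e :=
  have hst : e + t + s = e + t := by rw [add_comm, hs]
  c.trans (hst ▸ c.add (c.symm ht) (c.refl s)) ht

namespace AddMonoidAlgebra

variable {k S M : Type*}

theorem single_add_add_single_of_le [Semiring S] (x : AddMonoidAlgebra S M) {n : M} {s t : S}
    (h : s + (x.coeff n + t) = x.coeff n + t) :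
    single n s + (x + single n t) = x + single n t := by
  classical
  ext n'
  by_cases hn : n = n'
  · subst hn; simpa [coeff_add] using h
  · simp [coeff_add, hn]

section Binomial

variable [Semiring k] [AddCommMonoid M] {X Y : M} (a b : k) (g : AddMonoidAlgebra k M)

theorem coeff_binomial_mul_of_forall_ne_of_forall_ne {n : M} (hX : ∀ z, X + z ≠ n)
    (hY : ∀ z, Y + z ≠ n) : ((single X a + single Y b) * g).coeff n = 0 := by
  rw [add_mul, coeff_add, Finsupp.add_apply, coeff_single_mul_of_forall_add_ne _ _ hX,
    coeff_single_mul_of_forall_add_ne _ _ hY, add_zero]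

variable [IsCancelAdd M]

theorem coeff_binomial_mul_of_add_eq {z z' : M} (h : X + z = Y + z') :
    ((single X a + single Y b) * g).coeff (X + z) = a * g.coeff z + b * g.coeff z' := by
  rw [add_mul, coeff_add, Finsupp.add_apply, coeff_single_mul_add, h, coeff_single_mul_add]

theorem coeff_binomial_mul_of_forall_ne {z : M} (h : ∀ z', X + z ≠ Y + z') :
    ((single X a + single Y b) * g).coeff (X + z) = a * g.coeff z := by
  rw [add_mul, coeff_add, Finsupp.add_apply, coeff_single_mul_add,
    coeff_single_mul_of_forall_add_ne _ _ fun d hd => h d hd.symm, add_zero]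

end Binomial

end AddMonoidAlgebra

section Valuation

variable {k S : Type*} [Semiring S] {ν : k → S}

theorem val_le_val_add_add_val [Ring k] (hneg : ν (-1) = 1)
    (hmul : ∀ a b : k, ν (a * b) = ν a * ν b)
    (hsub : ∀ a b : k, ν (a + b) + ν a + ν b = ν a + ν b) (p q : k) :
    ν p + (ν (p + q) + ν q) = ν (p + q) + ν q := by
  have hνneg : ν (-q) = ν q := by rw [neg_eq_neg_one_mul, hmul, hneg, one_mul]
  simpa [add_assoc, hνneg] using hsub (p + q) (-q)

theorem val_ne_zero [DivisionRing k] [Nontrivial S] (h1 : ν 1 = 1)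
    (hmul : ∀ a b : k, ν (a * b) = ν a * ν b) {p : k} (hp : p ≠ 0) : ν p ≠ 0 := by
  intro hνp
  have := hmul p p⁻¹
  rw [mul_inv_cancel₀ hp, h1, hνp, zero_mul] at this
  exact one_ne_zero this

end Valuation

noncomputable def tropicalize {k S M : Type*} [Semiring k] [Semiring S] (ν : k → S)
    (h0 : ν 0 = 0) (p : AddMonoidAlgebra k M) : AddMonoidAlgebra S M :=
  ofCoeff (Finsupp.mapRange ν h0 p.coeff)

@[simp]
theorem coeff_tropicalize {k S M : Type*} [Semiring k] [Semiring S] (ν : k → S)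
    (h0 : ν 0 = 0) (p : AddMonoidAlgebra k M) (n : M) :
    (tropicalize ν h0 p).coeff n = ν (p.coeff n) := rfl

theorem tropicalize_binomial {k S M : Type*} [Semiring k] [Semiring S] {ν : k → S}
    (h0 : ν 0 = 0) {X Y : M} (hXY : X ≠ Y) (a b : k) :
    tropicalize ν h0 (single X a + single Y b) = single X (ν a) + single Y (ν b) := by
  classical
  ext n
  by_cases hX : X = n
  · subst hX; simp [coeff_add, hXY]
  · by_cases hY : Y = n
    · subst hY; simp [coeff_add, Ne.symm hXY]
    · simp [coeff_add, hX, hY, h0]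

theorem ringConGen_bendRel_binomial {S : Type*} [CommSemiring S] {X Y : Fin 2 →₀ ℕ}
    (hXY : X ≠ Y) {α β : S} (hα : α ≠ 0) (hβ : β ≠ 0) :
    ringConGen (bendRel (single X α + single Y β)) (single X α) (single Y β) := by
  classical
  set c := ringConGen (bendRel (single X α + single Y β))
  have hbend (n : Fin 2 →₀ ℕ) (hn : (single X α + single Y β).coeff n ≠ 0) :
      c (single X α + single Y β) ((single X α + single Y β).erase n) :=
    RingConGen.Rel.of _ _ ⟨n, Finsupp.mem_support_iff.mpr hn, rfl, rfl⟩
  have heraseX : (single X α + single Y β).erase X = single Y β := by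
    refine AddMonoidAlgebra.ext (Finsupp.ext fun n => ?_)
    by_cases hn : n = X <;> simp [coeff_add, hn, hXY, Finsupp.single_apply]
  have heraseY : (single X α + single Y β).erase Y = single X α := by
    refine AddMonoidAlgebra.ext (Finsupp.ext fun n => ?_)
    by_cases hn : n = Y <;> simp [coeff_add, hn, hXY, Finsupp.single_apply]
  have hX := hbend X (by simpa [coeff_add, hXY.symm] using hα)
  have hY := hbend Y (by simpa [coeff_add, hXY] using hβ)
  rw [heraseX] at hX
  rw [heraseY] at hY
  exact c.trans (c.symm hY) hX

theorem val_coeff_binomial_mul_le {k S M : Type*} [Semiring k] [Semiring S]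
    [AddCommMonoid M] [IsCancelAdd M] {ν : k → S} (h0 : ν 0 = 0) (hidem : ∀ s : S, s + s = s)
    (htot : ∀ a b : S, a + b = a ∨ a + b = b)
    (hsub : ∀ a b : k, ν (a + b) + ν a + ν b = ν a + ν b) {X Y : M} (a b : k)
    (g : AddMonoidAlgebra k M) {n : M} (hn : ν (((single X a + single Y b) * g).coeff n) ≠ 0) :
    (∃ z, n = Y + z ∧ ν (((single X a + single Y b) * g).coeff n) + ν (b * g.coeff z) =
      ν (b * g.coeff z)) ∨
    (∃ z, n = X + z ∧ ν (((single X a + single Y b) * g).coeff n) + ν (a * g.coeff z) =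
      ν (a * g.coeff z)) := by
  by_cases hX : ∃ z, X + z = n <;> by_cases hY : ∃ z, Y + z = n
  · obtain ⟨z, rfl⟩ := hX
    obtain ⟨z', hz'⟩ := hY
    have hle := hsub (a * g.coeff z) (b * g.coeff z')
    rw [add_assoc] at hle
    rw [coeff_binomial_mul_of_add_eq a b g hz'.symm]
    rcases htot (ν (a * g.coeff z)) (ν (b * g.coeff z')) with h | h
    · exact .inr ⟨z, rfl, by rwa [h] at hle⟩
    · exact .inl ⟨z', hz'.symm, by rwa [h] at hle⟩
  · obtain ⟨z, rfl⟩ := hX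
    refine .inr ⟨z, rfl, ?_⟩
    rw [coeff_binomial_mul_of_forall_ne a b g fun z' h => hY ⟨z', h.symm⟩, hidem]
  · obtain ⟨z, rfl⟩ := hY
    refine .inl ⟨z, rfl, ?_⟩
    rw [add_comm (single X a),
      coeff_binomial_mul_of_forall_ne b a g fun z' h => hX ⟨z', h.symm⟩, hidem]
  · rw [coeff_binomial_mul_of_forall_ne_of_forall_ne a b g (fun z h => hX ⟨z, h⟩)
      (fun z h => hY ⟨z, h⟩), h0] at hn
    exact absurd rfl hn

-- `degX` keeps the chain away from the monomials where `E` may differ from `ν(fg)`, and `degY`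
-- decreases along it, so the chain ends.
theorem rel_add_single_of_chain {k S M : Type*} [Ring k] [Semiring S]
    [AddCommMonoid M] [IsCancelAdd M] {ν : k → S} (hidem : ∀ s : S, s + s = s)
    (hneg : ν (-1) = 1) (hmul : ∀ a b : k, ν (a * b) = ν a * ν b)
    (hsub : ∀ a b : k, ν (a + b) + ν a + ν b = ν a + ν b)
    (c : RingCon (AddMonoidAlgebra S M)) {X Y : M} {a b : k}
    (hc : c (single X (ν a)) (single Y (ν b))) (degX degY : M →+ ℕ)
    (hdegX : degX Y < degX X) (hdegY : degY X < degY Y) (g : AddMonoidAlgebra k M)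
    (E : AddMonoidAlgebra S M) (d : ℕ)
    (hE : ∀ n, d < degX n → E.coeff n = ν (((single X a + single Y b) * g).coeff n))
    (z : M) (hz : d ≤ degX (Y + z)) :
    c (E + single (Y + z) (ν (b * g.coeff z))) E := by
  induction hn : degY z using Nat.strong_induction_on generalizing z with
  | _ n ih =>
  rw [map_add] at hz
  have hdX : d < degX (X + z) := by rw [map_add]; omega
  have hshift : c (E + single (Y + z) (ν (b * g.coeff z)))
      (E + single (X + z) (ν (a * g.coeff z))) := by
    rw [hmul, hmul, ← single_mul_single, ← single_mul_single]
    exact c.add (c.refl E) (c.symm (c.mul hc (c.refl _)))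
  refine c.trans hshift ?_
  by_cases hXY : ∃ z', X + z = Y + z'
  · obtain ⟨z', hz'⟩ := hXY
    have hdeg := congrArg degY hz'
    have hdeg' := congrArg degX hz'
    rw [map_add, map_add] at hdeg hdeg'
    have hnext := ih (degY z') (by omega) z' (by rw [map_add]; omega) rfl
    refine c.rel_add_of_le hnext ?_
    rw [← hz']
    refine single_add_add_single_of_le E ?_
    rw [hE _ hdX, coeff_binomial_mul_of_add_eq a b g hz']
    exact val_le_val_add_add_val hneg hmul hsub _ _
  · simp only [not_exists] at hXY
    have habs : single (X + z) (ν (a * g.coeff z)) + (E + single (X + z) 0) =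
        E + single (X + z) 0 := by
      refine single_add_add_single_of_le E ?_
      rw [hE _ hdX, coeff_binomial_mul_of_forall_ne a b g hXY, add_zero, hidem]
    rw [single_zero, add_zero, add_comm] at habs
    rw [habs]
    exact c.refl E

theorem rel_tropicalize_erase_of_le {k S M : Type*} [Ring k] [Semiring S]
    [AddCommMonoid M] [IsCancelAdd M] {ν : k → S} (h0 : ν 0 = 0) (hidem : ∀ s : S, s + s = s)
    (hneg : ν (-1) = 1) (hmul : ∀ a b : k, ν (a * b) = ν a * ν b)
    (hsub : ∀ a b : k, ν (a + b) + ν a + ν b = ν a + ν b)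
    (c : RingCon (AddMonoidAlgebra S M)) {X Y : M} {a b : k}
    (hc : c (single X (ν a)) (single Y (ν b))) (degX degY : M →+ ℕ)
    (hdegX : degX Y < degX X) (hdegY : degY X < degY Y) (g : AddMonoidAlgebra k M) (z : M)
    (hle : ν (((single X a + single Y b) * g).coeff (Y + z)) + ν (b * g.coeff z) =
      ν (b * g.coeff z)) :
    c (tropicalize ν h0 ((single X a + single Y b) * g))
      ((tropicalize ν h0 ((single X a + single Y b) * g)).erase (Y + z)) := by
  set F := tropicalize ν h0 ((single X a + single Y b) * g)
  have hchain := rel_add_single_of_chain hidem hneg hmul hsub c hc degX degY hdegX hdegY g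
    (F.erase (Y + z)) (degX (Y + z))
    (fun n hn => by rw [coeff_erase, Finsupp.erase_ne (by rintro rfl; omega)]; rfl) z le_rfl
  conv_lhs => rw [← erase_add_single (Y + z) F]
  refine c.rel_add_of_le hchain (single_add_add_single_of_le _ ?_)
  rwa [coeff_erase, Finsupp.erase_same, zero_add]

/-- Let `ν : k → S` be a valued field with `S` a totally ordered idempotent
commutative semiring, and let `f = a·x + b·y` be a binomial with `a, b ≠ 0`.
For every `g ∈ k[x,y]`, all the bend relations of `ν(f·g)` lie in the semiring
congruence generated by the bend relations of `ν(f)`; i.e. `⟨B(ν f)⟩ ⊇ B(ν (f g))`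
(Proposition: a binomial is a scheme-theoretic tropical basis for the principal
ideal it generates). -/
theorem stmt18 (k S : Type*) [Field k] [CommSemiring S]
    (hidem : ∀ s : S, s + s = s) (htot : ∀ a b : S, a + b = a ∨ a + b = b)
    (ν : k → S) (h0 : ν 0 = 0) (h1 : ν 1 = 1) (hneg : ν (-1) = 1)
    (hmul : ∀ a b : k, ν (a * b) = ν a * ν b)
    (hsub : ∀ a b : k, ν (a + b) + ν a + ν b = ν a + ν b)
    (a b : k) (ha : a ≠ 0) (hb : b ≠ 0)
    (f : AddMonoidAlgebra k (Fin 2 →₀ ℕ))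
    (hf : f = AddMonoidAlgebra.ofCoeff (Finsupp.single (Finsupp.single (0 : Fin 2) 1) a
            + Finsupp.single (Finsupp.single (1 : Fin 2) 1) b)) :
    ∀ g : AddMonoidAlgebra k (Fin 2 →₀ ℕ),
      ∀ m ∈ (Finsupp.mapRange ν h0 (f * g).coeff).support,
        ringConGen (bendRel (AddMonoidAlgebra.ofCoeff (Finsupp.mapRange ν h0 f.coeff) : AddMonoidAlgebra S (Fin 2 →₀ ℕ)))
          (AddMonoidAlgebra.ofCoeff (Finsupp.mapRange ν h0 (f * g).coeff))
          (AddMonoidAlgebra.ofCoeff (Finsupp.erase m (Finsupp.mapRange ν h0 (f * g).coeff))) := by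
  intro g m hm
  rcases subsingleton_or_nontrivial S with hS | hS
  · exact absurd (Subsingleton.elim _ _) (Finsupp.mem_support_iff.mp hm)
  set X : Fin 2 →₀ ℕ := Finsupp.single 0 1
  set Y : Fin 2 →₀ ℕ := Finsupp.single 1 1
  have hXY : X ≠ Y := by simp [X, Y, Finsupp.single_eq_single_iff]
  replace hf : f = single X a + single Y b := hf
  have hc : ringConGen (bendRel (tropicalize ν h0 f)) (single X (ν a)) (single Y (ν b)) := by
    rw [hf, tropicalize_binomial h0 hXY]
    exact ringConGen_bendRel_binomial hXY (val_ne_zero h1 hmul ha) (val_ne_zero h1 hmul hb)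
  show ringConGen (bendRel (tropicalize ν h0 f)) (tropicalize ν h0 (f * g))
    ((tropicalize ν h0 (f * g)).erase m)
  generalize ringConGen (bendRel (tropicalize ν h0 f)) = c at hc ⊢
  subst hf
  obtain ⟨z, rfl, hle⟩ | ⟨z, rfl, hle⟩ :=
    val_coeff_binomial_mul_le h0 hidem htot hsub a b g (Finsupp.mem_support_iff.mp hm)
  · exact rel_tropicalize_erase_of_le h0 hidem hneg hmul hsub c hc (Finsupp.applyAddHom 0)
      (Finsupp.applyAddHom 1) (by simp [X, Y]) (by simp [X, Y]) g z hle
  · rw [add_comm (single X a)] at hle ⊢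
    exact rel_tropicalize_erase_of_le h0 hidem hneg hmul hsub c (c.symm hc)
      (Finsupp.applyAddHom 1) (Finsupp.applyAddHom 0) (by simp [X, Y]) (by simp [X, Y]) g z hle
end
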